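/- Let m ≥ 1 be an integer, let s > max{2(m−1), m} + 1/2, and let ψ ∈ L^{2,s}(ℝ) satisfy ψ̂(k) = O(k^m) as k → 0, i.e. there exist δ > 0 and C ≥ 0 with |ψ̂(k)| ≤ C|k|^m for all 0 < |k| < δ. Then ∫_ℝ x^j ψ(x) dx = 0 for every j = 0, 1, …, m−1. -/

import Mathlib

/-
Since `s > m + 1/2`, Cauchy–Schwarz against the integrable weight `(1 + x²)^(m - s)` makes the
moments `∫ x^j ψ` finite for `j ≤ m`. Expanding `e^{-ikx}` to order `m`, with remainder bounded by
`(m + 2) |kx|^m` because `|e^{-ikx}| = 1`, shows that `ψ̂(k)` agrees up to `O(k^m)` with the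
polynomial `∑_{j<m} (-ik)^j / j! ∫ x^j ψ`. A polynomial of degree `< m` that is `O(k^m)` at `0`
has all coefficients zero.
-/

open MeasureTheory Filter

/-- Membership in the weighted space `L^{2,s}(ℝ)`. -/
def MemL2s (s : ℝ) (ψ : ℝ → ℂ) : Prop :=
  Measurable ψ ∧ Integrable (fun x : ℝ => (1 + x ^ 2) ^ s * ‖ψ x‖ ^ 2)

/-- The Fourier transform `ψ̂(k) = (2π)^{-1/2} ∫ e^{-ikx} ψ(x) dx`. -/
noncomputable def FT (ψ : ℝ → ℂ) (k : ℝ) : ℂ :=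
  (((2 * Real.pi) ^ (-(1 : ℝ) / 2) : ℝ) : ℂ) *
    ∫ x : ℝ, Complex.exp (-(Complex.I * (k : ℂ) * (x : ℂ))) * ψ x

open Finset Asymptotics Topology

theorem Complex.norm_exp_sub_sum_le_of_norm_exp_le_one {z : ℂ} (hz : ‖exp z‖ ≤ 1) (n : ℕ) :
    ‖exp z - ∑ i ∈ range n, z ^ i / i.factorial‖ ≤ (n + 2) * ‖z‖ ^ n := by
  rcases le_or_gt ‖z‖ 1 with hz₁ | hz₁
  · rcases n.eq_zero_or_pos with rfl | hn
    · simp only [range_zero, sum_empty, sub_zero, pow_zero]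
      linarith
    refine (exp_bound hz₁ hn).trans ?_
    rw [mul_comm]
    gcongr
    have : (1 : ℝ) ≤ n.factorial * n := by
      exact_mod_cast Nat.one_le_iff_ne_zero.2 (Nat.mul_ne_zero n.factorial_ne_zero hn.ne')
    calc (n.succ : ℝ) * (n.factorial * n : ℝ)⁻¹ ≤ n.succ :=
          mul_le_of_le_one_right (by positivity) (inv_le_one_of_one_le₀ this)
      _ ≤ n + 2 := by push_cast; linarith
  · have hterm : ∀ i ∈ range n, ‖z ^ i / i.factorial‖ ≤ ‖z‖ ^ n := fun i hi => by
      rw [norm_div, norm_pow, Complex.norm_natCast]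
      exact (div_le_self (by positivity) (mod_cast i.factorial_pos)).trans
        (pow_le_pow_right₀ hz₁.le (mem_range.1 hi).le)
    calc ‖exp z - ∑ i ∈ range n, z ^ i / i.factorial‖
        ≤ 1 + n * ‖z‖ ^ n := by
          refine (norm_sub_le _ _).trans (add_le_add hz ?_)
          simpa using (norm_sum_le _ _).trans (sum_le_sum hterm)
      _ ≤ (n + 2) * ‖z‖ ^ n := by nlinarith [one_le_pow₀ (n := n) hz₁.le]

theorem eq_zero_of_sum_pow_smul_isBigO {E : Type*} [NormedAddCommGroup E] [NormedSpace ℝ E]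
    {m : ℕ} {c : ℕ → E}
    (h : (fun k : ℝ => ∑ i ∈ range m, k ^ i • c i) =O[𝓝[≠] 0] fun k => k ^ m) :
    ∀ i < m, c i = 0 := by
  induction m generalizing c with
  | zero => simp
  | succ m ih =>
    have hc₀ : c 0 = 0 := by
      have hcont :
          Tendsto (fun k : ℝ => ∑ i ∈ range (m + 1), k ^ i • c i) (𝓝[≠] 0) (𝓝 (c 0)) := by
        have : Continuous (fun k : ℝ => ∑ i ∈ range (m + 1), k ^ i • c i) := by fun_prop
        have h₀ : ∑ i ∈ range (m + 1), (0 : ℝ) ^ i • c i = c 0 := by simp [sum_range_succ']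
        exact h₀ ▸ (this.tendsto 0).mono_left nhdsWithin_le_nhds
      refine tendsto_nhds_unique hcont (h.trans_tendsto ?_)
      exact ((continuous_pow (m + 1)).tendsto' 0 0 (by simp)).mono_left nhdsWithin_le_nhds
    have hsplit (k : ℝ) :
        ∑ i ∈ range (m + 1), k ^ i • c i = k • ∑ i ∈ range m, k ^ i • c (i + 1) := by
      simp only [sum_range_succ', hc₀, smul_zero, add_zero, smul_sum, smul_smul, pow_succ']
    have hshift : (fun k : ℝ => ∑ i ∈ range m, k ^ i • c (i + 1)) =O[𝓝[≠] 0] fun k => k ^ m := by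
      have := (isBigO_refl (fun k : ℝ => k⁻¹) (𝓝[≠] 0)).smul h
      refine this.congr' ?_ ?_ <;> filter_upwards [self_mem_nhdsWithin] with k hk
      · simp [hsplit, smul_smul, inv_mul_cancel₀ (show k ≠ 0 from hk)]
      · simp [pow_succ', ← mul_assoc, inv_mul_cancel₀ (show k ≠ 0 from hk)]
    rintro (_ | i) hi
    · exact hc₀
    · exact ih hshift i (by omega)

theorem integrable_one_add_sq_rpow {u : ℝ} (hu : u < -(1 / 2)) :
    Integrable (fun x : ℝ => (1 + x ^ 2) ^ u) := by
  have := integrable_rpow_neg_one_add_norm_sq (E := ℝ) (μ := volume) (r := -2 * u)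
    (by simp only [Module.finrank_self, Nat.cast_one]; linarith)
  simpa [Real.norm_eq_abs, sq_abs, show -(-2 * u) / 2 = u by ring] using this

theorem one_add_sq_rpow_sq (x a : ℝ) : ((1 + x ^ 2) ^ a) ^ 2 = (1 + x ^ 2) ^ (2 * a) := by
  rw [← Real.rpow_mul_natCast (by positivity)]
  ring_nf

theorem MemL2s.integrable_rpow_mul_norm {s t : ℝ} {ψ : ℝ → ℂ} (hψ : MemL2s s ψ)
    (ht : 2 * t - s < -(1 / 2)) :
    Integrable (fun x : ℝ => (1 + x ^ 2) ^ t * ‖ψ x‖) := by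
  have hweight : MemLp (fun x : ℝ => (1 + x ^ 2) ^ (t - s / 2)) 2 := by
    refine (memLp_two_iff_integrable_sq (by fun_prop : Measurable _).aestronglyMeasurable).2 ?_
    simpa only [one_add_sq_rpow_sq, show 2 * (t - s / 2) = 2 * t - s by ring]
      using integrable_one_add_sq_rpow ht
  have hψ₂ : MemLp (fun x : ℝ => (1 + x ^ 2) ^ (s / 2) * ‖ψ x‖) 2 := by
    refine (memLp_two_iff_integrable_sq (by have := hψ.1; fun_prop (disch := positivity))).2 ?_
    simpa only [mul_pow, one_add_sq_rpow_sq, mul_div_cancel₀ s two_ne_zero] using hψ.2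
  refine (hweight.integrable_mul hψ₂).congr (Eventually.of_forall fun x => ?_)
  simp only [Pi.mul_apply, ← mul_assoc, ← Real.rpow_add (by positivity : (0 : ℝ) < 1 + x ^ 2)]
  ring_nf

theorem abs_pow_le_one_add_sq_rpow (x : ℝ) (j : ℕ) : |x| ^ j ≤ (1 + x ^ 2) ^ ((j : ℝ) / 2) := by
  calc |x| ^ j ≤ √(1 + x ^ 2) ^ j :=
        pow_le_pow_left₀ (abs_nonneg x) (Real.abs_le_sqrt (by linarith [sq_nonneg x])) j
    _ = (1 + x ^ 2) ^ ((j : ℝ) / 2) := by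
        rw [Real.sqrt_eq_rpow, ← Real.rpow_mul_natCast (by positivity)]
        ring_nf

theorem MemL2s.integrable_pow_mul {s : ℝ} {ψ : ℝ → ℂ} (hψ : MemL2s s ψ) {j : ℕ}
    (hj : j + 1 / 2 < s) : Integrable (fun x : ℝ => (x : ℂ) ^ j * ψ x) := by
  refine (hψ.integrable_rpow_mul_norm (t := j / 2) (by linarith)).mono'
    (by have := hψ.1; fun_prop) (Eventually.of_forall fun x => ?_)
  rw [norm_mul, norm_pow, Complex.norm_real, Real.norm_eq_abs]
  exact mul_le_mul_of_nonneg_right (abs_pow_le_one_add_sq_rpow x j) (norm_nonneg _)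

section Moments

variable {ψ : ℝ → ℂ} {m : ℕ}

theorem norm_integral_exp_mul_sub_sum_moments_le
    (hψ : ∀ j ≤ m, Integrable (fun x : ℝ => (x : ℂ) ^ j * ψ x)) (k : ℝ) :
    ‖(∫ x : ℝ, Complex.exp (-(Complex.I * k * x)) * ψ x) -
        ∑ i ∈ range m, k ^ i • ((-Complex.I) ^ i / i.factorial * ∫ x : ℝ, (x : ℂ) ^ i * ψ x)‖
      ≤ (m + 2) * |k| ^ m * ∫ x : ℝ, ‖(x : ℂ) ^ m * ψ x‖ := by
  have hnorm_exp : ∀ x : ℝ, ‖Complex.exp (-(Complex.I * k * x))‖ = 1 := fun x => by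
    rw [Complex.norm_exp]; simp
  have hψ₀ : Integrable ψ := by simpa using hψ 0 m.zero_le
  have hexp : Integrable (fun x : ℝ => Complex.exp (-(Complex.I * k * x)) * ψ x) :=
    hψ₀.bdd_mul (c := 1) (by fun_prop) (Eventually.of_forall fun x => (hnorm_exp x).le)
  have hterm : ∀ i ∈ range m, Integrable (fun x : ℝ =>
      (-(Complex.I * k * x)) ^ i / i.factorial * ψ x) := fun i hi =>
    ((hψ i (mem_range.1 hi).le).const_mul ((-(Complex.I * k)) ^ i / i.factorial)).congr
      (Eventually.of_forall fun x => by ring)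
  have htaylor :
      ∑ i ∈ range m, k ^ i • ((-Complex.I) ^ i / i.factorial * ∫ x : ℝ, (x : ℂ) ^ i * ψ x)
        = ∫ x : ℝ, (∑ i ∈ range m, (-(Complex.I * k * x)) ^ i / i.factorial) * ψ x := by
    simp only [sum_mul]
    rw [integral_finsetSum _ hterm]
    refine sum_congr rfl fun i _ => ?_
    rw [Complex.real_smul, ← integral_const_mul, ← integral_const_mul]
    congr 1 with x
    push_cast
    ring
  rw [htaylor, ← integral_sub hexp (integrable_finsetSum _ hterm |>.congr ?_),
    ← integral_const_mul]
  · refine norm_integral_le_of_norm_le ((hψ m le_rfl).norm.const_mul _)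
      (Eventually.of_forall fun x => ?_)
    have hz : ‖-(Complex.I * k * x)‖ = |k| * |x| := by simp
    have := Complex.norm_exp_sub_sum_le_of_norm_exp_le_one (hnorm_exp x).le m
    rw [hz] at this
    calc ‖Complex.exp (-(Complex.I * k * x)) * ψ x -
            (∑ i ∈ range m, (-(Complex.I * k * x)) ^ i / i.factorial) * ψ x‖
        ≤ (m + 2) * (|k| * |x|) ^ m * ‖ψ x‖ := by
          rw [← sub_mul, norm_mul]; exact mul_le_mul_of_nonneg_right this (norm_nonneg _)
      _ = (m + 2) * |k| ^ m * ‖(x : ℂ) ^ m * ψ x‖ := by simp [mul_pow]; ring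
  · exact Eventually.of_forall fun x => by simp only [sum_mul]

theorem integral_pow_mul_eq_zero_of_isBigO
    (hψ : ∀ j ≤ m, Integrable (fun x : ℝ => (x : ℂ) ^ j * ψ x))
    (hO : (fun k : ℝ => ∫ x : ℝ, Complex.exp (-(Complex.I * k * x)) * ψ x) =O[𝓝[≠] 0]
      fun k => k ^ m) :
    ∀ j < m, ∫ x : ℝ, (x : ℂ) ^ j * ψ x = 0 := by
  have hremainder := isBigO_of_le' (𝓝[≠] 0) fun k =>
    (norm_integral_exp_mul_sub_sum_moments_le hψ k).trans_eq
      (by rw [norm_pow, Real.norm_eq_abs]; ring :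
        _ = ((m + 2) * ∫ x : ℝ, ‖(x : ℂ) ^ m * ψ x‖) * ‖k ^ m‖)
  intro j hj
  have := eq_zero_of_sum_pow_smul_isBigO
    ((hO.sub hremainder).congr_left fun k => sub_sub_cancel _ _) j hj
  simpa [Complex.I_ne_zero, Nat.factorial_ne_zero] using this

theorem FT_isBigO_iff {l : Filter ℝ} {g : ℝ → ℝ} :
    FT ψ =O[l] g ↔
      (fun k : ℝ => ∫ x : ℝ, Complex.exp (-(Complex.I * k * x)) * ψ x) =O[l] g := by
  refine isBigO_const_mul_left_iff ?_
  norm_cast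
  positivity

end Moments

theorem stmt9_general (m : ℕ) (s : ℝ)
    (hs : s > max (2 * ((m : ℝ) - 1)) (m : ℝ) + 1 / 2)
    (ψ : ℝ → ℂ) (hψ : MemL2s s ψ)
    (hO : ∃ δ > (0 : ℝ), ∃ C ≥ (0 : ℝ), ∀ k : ℝ, 0 < |k| → |k| < δ →
      ‖FT ψ k‖ ≤ C * |k| ^ m) :
    ∀ j < m, ∫ x : ℝ, (x : ℂ) ^ j * ψ x = 0 := by
  obtain ⟨δ, hδ, C, -, hO⟩ := hO
  have hmoments : ∀ j ≤ m, Integrable (fun x : ℝ => (x : ℂ) ^ j * ψ x) := fun j hj =>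
    hψ.integrable_pow_mul <| by
      have : (j : ℝ) ≤ m := mod_cast hj
      linarith [le_max_right (2 * ((m : ℝ) - 1)) m]
  refine integral_pow_mul_eq_zero_of_isBigO hmoments (FT_isBigO_iff.1 <| IsBigO.of_bound C ?_)
  filter_upwards [self_mem_nhdsWithin, nhdsWithin_le_nhds (Metric.ball_mem_nhds 0 hδ)]
    with k hk₀ hkδ
  simpa [abs_pos.2 hk₀] using hO k (abs_pos.2 hk₀) (by simpa using hkδ)

/-- If `ψ ∈ L^{2,s}(ℝ)` with `s > max{2(m−1), m} + 1/2` satisfies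
`ψ̂(k) = O(k^m)` as `k → 0`, then the first `m` moments of `ψ` vanish:
`∫ x^j ψ(x) dx = 0` for `j = 0, 1, …, m−1`. -/
theorem stmt9 (m : ℕ) (hm : 1 ≤ m) (s : ℝ)
    (hs : s > max (2 * ((m : ℝ) - 1)) (m : ℝ) + 1 / 2)
    (ψ : ℝ → ℂ) (hψ : MemL2s s ψ)
    (hO : ∃ δ > (0 : ℝ), ∃ C ≥ (0 : ℝ), ∀ k : ℝ, 0 < |k| → |k| < δ →
      ‖FT ψ k‖ ≤ C * |k| ^ m) :
    ∀ j < m, ∫ x : ℝ, (x : ℂ) ^ j * ψ x = 0 :=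
  stmt9_general m s hs ψ hψ hO
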